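/- arXiv:1905.07605 — 2 statements merged into one kernel-verified Lean document; each statement's English description precedes it below -/
import Mathlib

section
/- Let Γ be a countable group acting faithfully on the right by homeomorphisms on a topological space X, let U and V be disjoint nonempty open subsets of X such that Γ_{U→V} ≠ ∅, and let μ be an invariant random subgroup of Γ. Then for every finite subset A of the set of partial homeomorphisms Γ̄_{U→V}, μ-almost every subgroup H with H̄_{U→V} ∩ A ≠ ∅ satisfies that the index of H̄_{U→U} ∩ R_Γ(U) in R_Γ(U) is finite, where both H̄_{U→U} and R_Γ(U) are viewed as groups of homeomorphisms of U. -/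
/-!
Write `S(H) = H̄_{U→U} ∩ R_Γ(U)` and fix `γ` with `U·γ = V`. Conjugation by `c ∈ R_Γ(V)` does not
change `S(H)`, since `c` is trivial on `U`, and it turns the event `γ|_U ∈ H̄_{U→V}` into
`(γc)|_U ∈ H̄_{U→V}`; for `c = γ⁻¹rγ` with `r ∈ R_Γ(U)` this is `(rγ)|_U ∈ H̄_{U→V}`. If
`r₁, …, rₙ ∈ R_Γ(U)` lie in distinct right cosets of `S(H)`, at most one of these `n` events holds
for `H`, because two witnesses would put some `rⱼ rᵢ⁻¹` into `S(H)`. So, by invariance of `μ`, on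
every conjugation-invariant set `Q` of such subgroups `n · μ(Q ∩ {γ|_U ∈ H̄_{U→V}}) ≤ μ(Q) ≤ 1`.
Countably many such sets cover the subgroups with at least `n` cosets, and letting `n → ∞` shows
that infinite index and `γ|_U ∈ H̄_{U→V}` occur together only on a null set.
-/

open MeasureTheory

/-- The measurable structure on the space of subgroups of a group, obtained from the
product ("cylinder") σ-algebra on `Set Γ ≅ {0,1}^Γ` via the embedding `H ↦ (H : Set Γ)`. -/
instance subgroupMeasurableSpace {Γ : Type*} [Group Γ] : MeasurableSpace (Subgroup Γ) :=
  MeasurableSpace.comap (fun H => (H : Set Γ)) inferInstance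

/-- The conjugate of a subgroup `H` by a group element `g`. -/
def conjSubgroup {Γ : Type*} [Group Γ] (g : Γ) (H : Subgroup Γ) : Subgroup Γ :=
  Subgroup.map (MulAut.conj g).toMonoidHom H

/-- An invariant random subgroup: a Borel probability measure on `Sub(Γ)` invariant
under the conjugation action of `Γ`. -/
def IsIRS {Γ : Type*} [Group Γ] (μ : Measure (Subgroup Γ)) : Prop :=
  IsProbabilityMeasure μ ∧ ∀ g : Γ, μ.map (conjSubgroup g) = μ

open Set

lemma ENNReal.eq_zero_of_forall_natCast_mul_le {a b : ENNReal} (hb : b ≠ ⊤)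
    (h : ∀ n : ℕ, n * a ≤ b) : a = 0 := by
  by_contra ha
  obtain ⟨n, hn⟩ := ENNReal.exists_nat_mul_gt ha hb
  exact (h n).not_gt hn

lemma mul_measure_iUnion_inter_le {α : Type*} {m m₀ : MeasurableSpace α} (hm : m ≤ m₀)
    (μ : Measure[m₀] α) (P : Set α) (a : ENNReal) {D : ℕ → Set α}
    (hD : ∀ k, MeasurableSet[m] (D k))
    (hDP : ∀ k Q, MeasurableSet[m] Q → Q ⊆ D k → a * μ (Q ∩ P) ≤ μ Q) :
    a * μ ((⋃ k, D k) ∩ P) ≤ μ (⋃ k, D k) := by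
  have hdisj : ∀ k, MeasurableSet[m] (disjointed D k) := MeasurableSet.disjointed hD
  rw [← iUnion_disjointed, iUnion_inter,
    measure_iUnion (disjoint_disjointed D) fun k => hm _ (hdisj k)]
  calc a * μ (⋃ k, disjointed D k ∩ P) ≤ a * ∑' k, μ (disjointed D k ∩ P) := by
        gcongr; exact measure_iUnion_le _
    _ = ∑' k, a * μ (disjointed D k ∩ P) := ENNReal.tsum_mul_left.symm
    _ ≤ ∑' k, μ (disjointed D k) :=
        ENNReal.tsum_le_tsum fun k => hDP k _ (hdisj k) (disjointed_subset D k)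

lemma mem_conjSubgroup {Γ : Type*} [Group Γ] {c y : Γ} {H : Subgroup Γ} :
    y ∈ conjSubgroup c H ↔ c⁻¹ * y * c ∈ H := by
  rw [conjSubgroup, Subgroup.mem_map_equiv, MulAut.conj_symm_apply]

lemma conjSubgroup_inv_conjSubgroup {Γ : Type*} [Group Γ] (c : Γ) (H : Subgroup Γ) :
    conjSubgroup c⁻¹ (conjSubgroup c H) = H := by
  ext y
  simp [mem_conjSubgroup, mul_assoc]

lemma exists_finset_pairwise_mul_inv_notMem {G : Type*} [Group G] {R : Set G}
    {S : Subgroup G} (h : {C : Set G | ∃ g ∈ R, C = {y | ∃ t, t ∈ S ∧ y = t * g}}.Infinite)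
    (n : ℕ) : ∃ F : Finset G, ↑F ⊆ R ∧ F.card = n ∧
      (F : Set G).Pairwise fun r r' => r' * r⁻¹ ∉ S := by
  set coset : G → Set G := fun g => {y | ∃ t, t ∈ S ∧ y = t * g}
  have coset_eq : ∀ g, coset g = {y | y * g⁻¹ ∈ S} := fun g => by
    ext y
    refine ⟨?_, fun hy => ⟨y * g⁻¹, hy, by group⟩⟩
    rintro ⟨t, ht, rfl⟩
    simpa using ht
  obtain ⟨R', hR'R, hbij⟩ := exists_subset_bijOn R coset
  have hR' : R'.Infinite := by
    have hfam : {C : Set G | ∃ g ∈ R, C = coset g} = coset '' R' := by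
      rw [hbij.image_eq]
      ext C
      simp [eq_comm]
    exact (hfam ▸ h).of_image coset
  obtain ⟨F, hFR', hcard⟩ := hR'.exists_subset_card_eq n
  refine ⟨F, hFR'.trans hR'R, hcard, fun r hr r' hr' hne hmem => hne ?_⟩
  refine hbij.injOn (hFR' hr) (hFR' hr') ?_
  ext y
  simp only [coset_eq, mem_ofPred_eq]
  rw [← S.mul_mem_cancel_right (S.inv_mem hmem)]
  group

section RightAction

variable {Γ X : Type*} [Group Γ] [TopologicalSpace X] {ρ : Γ → (X ≃ₜ X)}
  (hact : ∀ g h : Γ, ∀ x : X, ρ (g * h) x = ρ h (ρ g x))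
include hact

lemma act_one_apply (x : X) : ρ 1 x = x :=
  (ρ 1).injective (by rw [← hact, one_mul])

lemma act_inv_eq_symm (g : Γ) : ρ g⁻¹ = (ρ g).symm := by
  ext x
  rw [Homeomorph.eq_symm_apply, ← hact, inv_mul_cancel, act_one_apply hact]

def rigidStab (W : Set X) : Subgroup Γ where
  carrier := {g | ∀ x ∉ W, ρ g x = x}
  one_mem' x _ := act_one_apply hact x
  mul_mem' {g h} hg hh x hx := by rw [hact, hg x hx, hh x hx]
  inv_mem' {g} hg x hx := by rw [act_inv_eq_symm hact, Homeomorph.symm_apply_eq, hg x hx]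

lemma image_eq_of_mem_rigidStab {W : Set X} {g : Γ} (hg : g ∈ rigidStab hact W) :
    ρ g '' W = W := by
  have hcompl : ρ g '' Wᶜ = Wᶜ := by
    ext y
    refine ⟨?_, fun hy => ⟨y, hy, hg y hy⟩⟩
    rintro ⟨x, hx, rfl⟩
    rwa [hg x hx]
  rw [← compl_inj_iff, ← (ρ g).image_compl, hcompl]

lemma conj_mem_rigidStab_image {W : Set X} {r : Γ} (hr : r ∈ rigidStab hact W) (γ : Γ) :
    γ⁻¹ * r * γ ∈ rigidStab hact (ρ γ '' W) := by
  intro x hx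
  have hx' : ρ γ⁻¹ x ∉ W := fun hW => hx ⟨_, hW, by rw [← hact, inv_mul_cancel, act_one_apply hact]⟩
  rw [hact, hact, hr _ hx', ← hact, inv_mul_cancel, act_one_apply hact]

/-- The paper's `H̄_{U→U} ∩ R_Γ(U)`, realised inside `Γ`. -/
def rigidStabTrace (U : Set X) (H : Subgroup Γ) : Subgroup Γ where
  carrier := {t | t ∈ rigidStab hact U ∧ ∃ h ∈ H, ρ h '' U = U ∧ EqOn (ρ t) (ρ h) U}
  one_mem' := ⟨one_mem _, 1, one_mem H, image_eq_of_mem_rigidStab hact (one_mem _), fun _ _ => rfl⟩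
  mul_mem' := by
    rintro t t' ⟨ht, k, hk, hkU, htk⟩ ⟨ht', k', hk', -, htk'⟩
    have heq : EqOn (ρ (t * t')) (ρ (k * k')) U := fun x hx => by
      rw [hact, hact, htk hx, htk' (hkU ▸ mem_image_of_mem _ hx)]
    refine ⟨mul_mem ht ht', k * k', mul_mem hk hk', ?_, heq⟩
    rw [← heq.image_eq]
    exact image_eq_of_mem_rigidStab hact (mul_mem ht ht')
  inv_mem' := by
    rintro t ⟨ht, k, hk, hkU, htk⟩
    have htU := image_eq_of_mem_rigidStab hact ht
    have heq : EqOn (ρ t⁻¹) (ρ k⁻¹) U := by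
      intro y hy
      rw [← htU] at hy
      obtain ⟨x, hx, rfl⟩ := hy
      rw [act_inv_eq_symm hact, act_inv_eq_symm hact, Homeomorph.symm_apply_apply, htk hx,
        Homeomorph.symm_apply_apply]
    refine ⟨inv_mem ht, k⁻¹, inv_mem hk, ?_, heq⟩
    rw [← heq.image_eq]
    exact image_eq_of_mem_rigidStab hact (inv_mem ht)

variable (ρ) in
/-- The event `w|_U ∈ H̄_{U→V}`. -/
def hasRestrictionOf (U V : Set X) (w : Γ) : Set (Subgroup Γ) :=
  {H | ∃ h ∈ H, ρ h '' U = V ∧ EqOn (ρ h) (ρ w) U}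

def cosetSeparated (U : Set X) (F : Finset Γ) : Set (Subgroup Γ) :=
  {H | (F : Set Γ).Pairwise fun r r' => r' * r⁻¹ ∉ rigidStabTrace hact U H}

lemma act_conj_apply_of_mem_rigidStab {V : Set X} {c : Γ} (hc : c ∈ rigidStab hact V)
    (h : Γ) {x : X} (hx : x ∉ V) : ρ (c⁻¹ * h * c) x = ρ c (ρ h x) := by
  rw [hact, hact, inv_mem hc x hx]

variable {U V : Set X} {c : Γ}

lemma rigidStabTrace_conjSubgroup_le (hUV : Disjoint U V) (hc : c ∈ rigidStab hact V)
    (H : Subgroup Γ) : rigidStabTrace hact U (conjSubgroup c H) ≤ rigidStabTrace hact U H := by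
  rintro t ⟨ht, h, hh, hhU, hth⟩
  have hk : EqOn (ρ (c⁻¹ * h * c)) (ρ h) U := fun x hx => by
    rw [act_conj_apply_of_mem_rigidStab hact hc h (hUV.notMem_of_mem_left hx)]
    exact hc _ (hUV.notMem_of_mem_left (hhU ▸ mem_image_of_mem _ hx))
  exact ⟨ht, _, mem_conjSubgroup.1 hh, hk.image_eq.trans hhU, hth.trans hk.symm⟩

lemma rigidStabTrace_conjSubgroup (hUV : Disjoint U V) (hc : c ∈ rigidStab hact V)
    (H : Subgroup Γ) : rigidStabTrace hact U (conjSubgroup c H) = rigidStabTrace hact U H := by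
  refine le_antisymm (rigidStabTrace_conjSubgroup_le hact hUV hc H) ?_
  simpa only [conjSubgroup_inv_conjSubgroup] using
    rigidStabTrace_conjSubgroup_le hact hUV (inv_mem hc) (conjSubgroup c H)

lemma mem_hasRestrictionOf_of_conjSubgroup (hUV : Disjoint U V) (hc : c ∈ rigidStab hact V)
    {H : Subgroup Γ} {w : Γ} (hH : conjSubgroup c H ∈ hasRestrictionOf ρ U V w) :
    H ∈ hasRestrictionOf ρ U V (w * c) := by
  obtain ⟨h, hh, hhU, hhw⟩ := hH
  have hk : EqOn (ρ (c⁻¹ * h * c)) (ρ c ∘ ρ h) U := fun x hx =>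
    act_conj_apply_of_mem_rigidStab hact hc h (hUV.notMem_of_mem_left hx)
  refine ⟨_, mem_conjSubgroup.1 hh, ?_, fun x hx => ?_⟩
  · rw [hk.image_eq, image_comp, hhU, image_eq_of_mem_rigidStab hact hc]
  · rw [hk hx, Function.comp_apply, hhw hx, hact]

lemma preimage_conjSubgroup_hasRestrictionOf (hUV : Disjoint U V) (hc : c ∈ rigidStab hact V)
    (w : Γ) : conjSubgroup c ⁻¹' hasRestrictionOf ρ U V w = hasRestrictionOf ρ U V (w * c) := by
  ext H
  refine ⟨mem_hasRestrictionOf_of_conjSubgroup hact hUV hc, fun hH => ?_⟩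
  have := mem_hasRestrictionOf_of_conjSubgroup hact hUV (inv_mem hc)
    (H := conjSubgroup c H) (w := w * c) (by rwa [conjSubgroup_inv_conjSubgroup])
  rwa [mul_inv_cancel_right] at this

lemma preimage_conjSubgroup_cosetSeparated (hUV : Disjoint U V) (hc : c ∈ rigidStab hact V)
    (F : Finset Γ) : conjSubgroup c ⁻¹' cosetSeparated hact U F = cosetSeparated hact U F := by
  ext H
  simp only [cosetSeparated, mem_preimage, mem_ofPred_eq, rigidStabTrace_conjSubgroup hact hUV hc]

lemma mul_inv_mem_rigidStabTrace {H : Subgroup Γ} {γ t t' : Γ} (ht : t ∈ rigidStab hact U)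
    (ht' : t' ∈ rigidStab hact U) (hH : H ∈ hasRestrictionOf ρ U V (t * γ))
    (hH' : H ∈ hasRestrictionOf ρ U V (t' * γ)) : t' * t⁻¹ ∈ rigidStabTrace hact U H := by
  obtain ⟨h, hh, -, hht⟩ := hH
  obtain ⟨h', hh', -, hht'⟩ := hH'
  have hrig : t' * t⁻¹ ∈ rigidStab hact U := mul_mem ht' (inv_mem ht)
  have heq : EqOn (ρ (t' * t⁻¹)) (ρ (h' * h⁻¹)) U := fun x hx => by
    have hy : ρ (t' * t⁻¹) x ∈ U := image_eq_of_mem_rigidStab hact hrig ▸ mem_image_of_mem _ hx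
    rw [hact h', act_inv_eq_symm hact, Homeomorph.eq_symm_apply, hht hy, hht' hx, hact, ← hact _ t,
      inv_mul_cancel_right, hact]
  refine ⟨hrig, _, mul_mem hh' (inv_mem hh), ?_, heq⟩
  rw [← heq.image_eq, image_eq_of_mem_rigidStab hact hrig]

end RightAction

section SubgroupSpace

variable {Γ : Type*} [Group Γ]

lemma measurable_mem_subgroup (h : Γ) : Measurable fun H : Subgroup Γ => h ∈ H :=
  (measurable_set_mem h).comp (comap_measurable _)

lemma measurableSet_setOf_exists_mem [Countable Γ] (P : Γ → Prop) :
    MeasurableSet {H : Subgroup Γ | ∃ h ∈ H, P h} := by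
  have hunion : {H : Subgroup Γ | ∃ h ∈ H, P h} = ⋃ h ∈ {h | P h}, {H : Subgroup Γ | h ∈ H} := by
    ext H
    simp [and_comm]
  rw [hunion]
  exact .biUnion (to_countable _) fun h _ => measurableSet_setOfPred.2 (measurable_mem_subgroup h)

lemma measurable_conjSubgroup (c : Γ) : Measurable (conjSubgroup c : Subgroup Γ → Subgroup Γ) := by
  refine measurable_comap_iff.2 (measurable_set_iff.2 fun γ => ?_)
  simp only [Function.comp_apply, SetLike.mem_coe, mem_conjSubgroup]
  exact measurable_mem_subgroup _

lemma IsIRS.measure_preimage_conjSubgroup {μ : Measure (Subgroup Γ)} (hμ : IsIRS μ) (c : Γ)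
    {B : Set (Subgroup Γ)} (hB : MeasurableSet B) : μ (conjSubgroup c ⁻¹' B) = μ B := by
  rw [← Measure.map_apply (measurable_conjSubgroup c) hB, hμ.2 c]

end SubgroupSpace

section Events

variable {Γ X : Type*} [Group Γ] [TopologicalSpace X] {ρ : Γ → (X ≃ₜ X)}
  (hact : ∀ g h : Γ, ∀ x : X, ρ (g * h) x = ρ h (ρ g x))
include hact

abbrev rigidConjInvariants (V : Set X) : MeasurableSpace (Subgroup Γ) :=
  ⨅ c : rigidStab hact V, MeasurableSpace.invariants (conjSubgroup (c : Γ))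

lemma rigidConjInvariants_le (V : Set X) : rigidConjInvariants hact V ≤ subgroupMeasurableSpace :=
  iInf_le_of_le ⟨1, one_mem _⟩ (MeasurableSpace.invariants_le _)

variable [Countable Γ] {U V : Set X}

omit hact in
lemma measurableSet_hasRestrictionOf (w : Γ) : MeasurableSet (hasRestrictionOf ρ U V w) :=
  measurableSet_setOf_exists_mem _

lemma measurableSet_rigidConjInvariants_cosetSeparated (hUV : Disjoint U V) (F : Finset Γ) :
    MeasurableSet[rigidConjInvariants hact V] (cosetSeparated hact U F) := by
  refine MeasurableSpace.measurableSet_iInf.2 fun c =>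
    ⟨?_, preimage_conjSubgroup_cosetSeparated hact hUV c.2 F⟩
  have hinter : cosetSeparated hact U F = ⋂ r ∈ F, ⋂ r' ∈ F, ⋂ (_ : r ≠ r'),
      {H | r' * r⁻¹ ∈ rigidStabTrace hact U H}ᶜ := by
    ext H
    simp [cosetSeparated, Set.Pairwise]
  rw [hinter]
  refine Finset.measurableSet_biInter _ fun r _ => Finset.measurableSet_biInter _ fun r' _ =>
    .iInter fun _ => .compl ?_
  exact (MeasurableSet.const _).inter (measurableSet_setOf_exists_mem _)

lemma card_mul_measure_inter_hasRestrictionOf_le (hUV : Disjoint U V) {μ : Measure (Subgroup Γ)}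
    (hμ : IsIRS μ) {γ : Γ} (hγ : ρ γ '' U = V) {F : Finset Γ} (hF : ↑F ⊆ (rigidStab hact U : Set Γ))
    {Q : Set (Subgroup Γ)} (hQ : MeasurableSet[rigidConjInvariants hact V] Q)
    (hQF : Q ⊆ cosetSeparated hact U F) :
    F.card * μ (Q ∩ hasRestrictionOf ρ U V γ) ≤ μ Q := by
  have hQm : MeasurableSet Q := rigidConjInvariants_le hact V _ hQ
  have htranslate : ∀ r ∈ F,
      μ (Q ∩ hasRestrictionOf ρ U V (r * γ)) = μ (Q ∩ hasRestrictionOf ρ U V γ) := by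
    intro r hr
    have hc : γ⁻¹ * r * γ ∈ rigidStab hact V := hγ ▸ conj_mem_rigidStab_image hact (hF hr) γ
    have hpre : conjSubgroup (γ⁻¹ * r * γ) ⁻¹' (Q ∩ hasRestrictionOf ρ U V γ) =
        Q ∩ hasRestrictionOf ρ U V (r * γ) := by
      rw [preimage_inter, (MeasurableSpace.measurableSet_iInf.1 hQ ⟨_, hc⟩).2,
        preimage_conjSubgroup_hasRestrictionOf hact hUV hc, ← mul_assoc, ← mul_assoc,
        mul_inv_cancel, one_mul]
    rw [← hpre]
    exact hμ.measure_preimage_conjSubgroup _ (hQm.inter (measurableSet_hasRestrictionOf _))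
  have hdisj : (F : Set Γ).PairwiseDisjoint fun r => Q ∩ hasRestrictionOf ρ U V (r * γ) := by
    intro r hr r' hr' hne
    refine disjoint_left.2 fun H ⟨hHQ, hHr⟩ ⟨_, hHr'⟩ => hQF hHQ hr hr' hne ?_
    exact mul_inv_mem_rigidStabTrace hact (hF hr) (hF hr') hHr hHr'
  calc (F.card : ENNReal) * μ (Q ∩ hasRestrictionOf ρ U V γ)
      = ∑ r ∈ F, μ (Q ∩ hasRestrictionOf ρ U V (r * γ)) := by
        rw [Finset.sum_congr rfl htranslate, Finset.sum_const, nsmul_eq_mul]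
    _ = μ (⋃ r ∈ F, Q ∩ hasRestrictionOf ρ U V (r * γ)) :=
        (measure_biUnion_finset hdisj fun r _ =>
          hQm.inter (measurableSet_hasRestrictionOf _)).symm
    _ ≤ μ Q := measure_mono (iUnion₂_subset fun _ _ => inter_subset_left)

end Events

lemma ae_finite_rigidStabTrace_cosets {Γ X : Type*} [Group Γ] [Countable Γ] [TopologicalSpace X]
    {ρ : Γ → (X ≃ₜ X)} (hact : ∀ g h : Γ, ∀ x : X, ρ (g * h) x = ρ h (ρ g x))
    {U V : Set X} (hUV : Disjoint U V) {μ : Measure (Subgroup Γ)} (hμ : IsIRS μ) {γ : Γ}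
    (hγ : ρ γ '' U = V) :
    ∀ᵐ H ∂μ, H ∈ hasRestrictionOf ρ U V γ →
      {C : Set Γ | ∃ g ∈ rigidStab hact U,
        C = {y | ∃ t, t ∈ rigidStabTrace hact U H ∧ y = t * g}}.Finite := by
  classical
  have := hμ.1
  rw [ae_iff]
  refine ENNReal.eq_zero_of_forall_natCast_mul_le ENNReal.one_ne_top fun n => ?_
  obtain ⟨e, he⟩ := exists_surjective_nat (Finset Γ)
  let D (k : ℕ) : Set (Subgroup Γ) :=
    if ↑(e k) ⊆ (rigidStab hact U : Set Γ) ∧ (e k).card = n then cosetSeparated hact U (e k)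
    else ∅
  have hD : ∀ k, MeasurableSet[rigidConjInvariants hact V] (D k) := fun k => by
    dsimp only [D]
    split_ifs
    exacts [measurableSet_rigidConjInvariants_cosetSeparated hact hUV _,
      @MeasurableSet.empty _ (rigidConjInvariants hact V)]
  have hDγ : ∀ k Q, MeasurableSet[rigidConjInvariants hact V] Q → Q ⊆ D k →
      n * μ (Q ∩ hasRestrictionOf ρ U V γ) ≤ μ Q := fun k Q hQ hQD => by
    dsimp only [D] at hQD
    split_ifs at hQD with hk
    · exact hk.2 ▸ card_mul_measure_inter_hasRestrictionOf_le hact hUV hμ hγ hk.1 hQ hQD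
    · simp [subset_empty_iff.1 hQD]
  calc _ ≤ n * μ ((⋃ k, D k) ∩ hasRestrictionOf ρ U V γ) := by
        gcongr
        intro H hH
        rw [mem_ofPred_eq, Classical.not_imp] at hH
        obtain ⟨F, hFR, hFn, hFsep⟩ := exists_finset_pairwise_mul_inv_notMem hH.2 n
        obtain ⟨k, rfl⟩ := he F
        refine ⟨mem_iUnion.2 ⟨k, ?_⟩, hH.1⟩
        simp only [D, if_pos (And.intro hFR hFn)]
        exact hFsep
    _ ≤ μ (⋃ k, D k) := mul_measure_iUnion_inter_le (rigidConjInvariants_le hact V) μ _ _ hD hDγ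
    _ ≤ 1 := prob_le_one

theorem stmt0_general {Γ X : Type*} [Group Γ] [Countable Γ] [TopologicalSpace X]
    (ρ : Γ → (X ≃ₜ X)) (hact : ∀ g h : Γ, ∀ x : X, ρ (g * h) x = ρ h (ρ g x))
    (U V : Set X) (hUV : Disjoint U V)
    (μ : Measure (Subgroup Γ)) (hμ : IsIRS μ)
    (A : Set (U → X)) (hAfin : A.Finite)
    (hA : ∀ f ∈ A, ∃ g : Γ, ρ g '' U = V ∧ f = fun x : U => ρ g x) :
    ∀ᵐ H ∂μ,
      (∃ f ∈ A, ∃ h ∈ H, ρ h '' U = V ∧ f = fun x : U => ρ h x) →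
      Set.Finite
        {C : Set Γ | ∃ g : Γ, (∀ x ∉ U, ρ g x = x) ∧
          C = {y : Γ | ∃ t : Γ,
              ((∀ x ∉ U, ρ t x = x) ∧
                ∃ h ∈ H, ρ h '' U = U ∧ ∀ x ∈ U, ρ t x = ρ h x) ∧
              y = t * g}} := by
  have key : ∀ f ∈ A, ∀ᵐ H ∂μ, (∃ h ∈ H, ρ h '' U = V ∧ f = fun x : U => ρ h x) →
      {C : Set Γ | ∃ g ∈ rigidStab hact U,
        C = {y | ∃ t, t ∈ rigidStabTrace hact U H ∧ y = t * g}}.Finite := by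
    intro f hf
    obtain ⟨γ, hγ, rfl⟩ := hA f hf
    filter_upwards [ae_finite_rigidStabTrace_cosets hact hUV hμ hγ] with H hH
    rintro ⟨h, hh, hhV, hhγ⟩
    exact hH ⟨h, hh, hhV, fun x hx => congrFun hhγ.symm ⟨x, hx⟩⟩
  filter_upwards [(ae_ball_iff hAfin.countable).2 key] with H hH
  rintro ⟨f, hf, hfH⟩
  exact hH f hf hfH

theorem stmt0 {Γ X : Type*} [Group Γ] [Countable Γ] [TopologicalSpace X]
    (ρ : Γ → (X ≃ₜ X)) (hact : ∀ g h : Γ, ∀ x : X, ρ (g * h) x = ρ h (ρ g x))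
    (hfaith : Function.Injective ρ)
    (U V : Set X) (hUo : IsOpen U) (hVo : IsOpen V)
    (hUne : U.Nonempty) (hVne : V.Nonempty) (hUV : Disjoint U V)
    (hΓUV : ∃ g : Γ, ρ g '' U = V)
    (μ : Measure (Subgroup Γ)) (hμ : IsIRS μ)
    (A : Set (U → X)) (hAfin : A.Finite)
    (hA : ∀ f ∈ A, ∃ g : Γ, ρ g '' U = V ∧ f = fun x : U => ρ g x) :
    ∀ᵐ H ∂μ,
      (∃ f ∈ A, ∃ h ∈ H, ρ h '' U = V ∧ f = fun x : U => ρ h x) →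
      Set.Finite
        {C : Set Γ | ∃ g : Γ, (∀ x ∉ U, ρ g x = x) ∧
          C = {y : Γ | ∃ t : Γ,
              ((∀ x ∉ U, ρ t x = x) ∧
                ∃ h ∈ H, ρ h '' U = U ∧ ∀ x ∈ U, ρ t x = ρ h x) ∧
              y = t * g}} :=
  stmt0_general ρ hact U V hUV μ hμ A hAfin hA
end

section
/- Let X be a nonempty finite set, let σ be a uniformly random permutation of X, and let U and K be nonempty subsets of X; write p = |U|/|X| and k = |K|. Then for every λ > 0, the expectation of exp(λ·|(K·σ) ∩ U|) is at most (p·e^λ + 1 − p)^k. -/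
/-!
Write `exp λ = 1 + c` with `c ≥ 0`. Expanding `∏_{x ∈ K} (1 + c·[σ x ∈ U])` over subsets
gives `E exp (λ |σK ∩ U|) = ∑_{T ⊆ K} c^|T| P(σT ⊆ U)`. Since permutations act transitively
on sets of a given size, `P(σT ⊆ U)` depends only on `t = |T|`, and double counting pairs
`(σ, T)` shows it equals `C(|U|, t) / C(|X|, t) ≤ p^t`. Summing over `T` gives `(1 + c p)^k`.
-/

open Finset Equiv

theorem Nat.choose_mul_pow_le_choose_mul_pow {m n : ℕ} (h : m ≤ n) (k : ℕ) :
    m.choose k * n ^ k ≤ n.choose k * m ^ k := by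
  suffices m.descFactorial k * n ^ k ≤ n.descFactorial k * m ^ k by
    simp only [descFactorial_eq_factorial_mul_choose, mul_assoc] at this
    exact Nat.le_of_mul_le_mul_left this k.factorial_pos
  induction k with
  | zero => simp
  | succ k ih =>
    have hstep : (m - k) * n ≤ (n - k) * m := by
      rw [Nat.sub_mul, Nat.sub_mul, mul_comm n m]
      exact Nat.sub_le_sub_left (Nat.mul_le_mul_left k h) _
    calc m.descFactorial (k + 1) * n ^ (k + 1)
        = ((m - k) * n) * (m.descFactorial k * n ^ k) := by rw [descFactorial_succ, pow_succ]; ring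
      _ ≤ ((n - k) * m) * (n.descFactorial k * m ^ k) := Nat.mul_le_mul hstep ih
      _ = n.descFactorial (k + 1) * m ^ (k + 1) := by rw [descFactorial_succ, pow_succ]; ring

theorem pow_card_image_inter_eq_sum_powerset {α β R : Type*} [DecidableEq β] [CommSemiring R]
    {f : α → β} (hf : f.Injective) (K : Finset α) (U : Finset β) (c : R) :
    (1 + c) ^ #(K.image f ∩ U) = ∑ T ∈ K.powerset with T.image f ⊆ U, c ^ #T := by
  have hpowerset : (K.filter (f · ∈ U)).powerset = {T ∈ K.powerset | T.image f ⊆ U} := by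
    ext T
    simp [subset_iff, forall_and]
  rw [← filter_mem_eq_inter, filter_image, card_image_of_injective _ hf, add_comm,
    ← sum_pow_mul_eq_add_pow, hpowerset]
  simp

section
variable {X : Type*} [DecidableEq X]

theorem Finset.exists_perm_image_eq_of_card_eq {T T' : Finset X} (h : #T = #T') :
    ∃ π : Perm X, T.image π = T' := by
  obtain ⟨π, hπ⟩ := (Set.powersetCard.isPretransitive (α := X) (n := #T)).exists_smul_eq
    ⟨T, rfl⟩ ⟨T', h.symm⟩
  refine ⟨π, ?_⟩
  simpa [Finset.smul_finset_def, Perm.smul_def] using congrArg Subtype.val hπ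

variable [Fintype X]

theorem card_perm_image_subset_congr {T T' : Finset X} (U : Finset X) (h : #T = #T') :
    #{σ : Perm X | T.image σ ⊆ U} = #{σ : Perm X | T'.image σ ⊆ U} := by
  obtain ⟨π, rfl⟩ := Finset.exists_perm_image_eq_of_card_eq h
  refine card_nbij' (· * π⁻¹) (· * π) ?_ ?_ ?_ ?_ <;> intro σ <;>
    simp [image_image, Function.comp_def]

theorem card_powersetCard_filter_image_subset (σ : Perm X) (U : Finset X) (t : ℕ) :
    #{T ∈ powersetCard t univ | T.image σ ⊆ U} = (#U).choose t := by
  rw [← card_powersetCard t U]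
  refine card_nbij' (·.image σ) (·.image σ.symm) ?_ ?_ ?_ ?_ <;> intro T <;>
    simp [image_image, Function.comp_def, card_image_of_injective _ σ.injective,
      card_image_of_injective _ σ.symm.injective, mem_powersetCard, and_comm]

theorem card_perm_image_subset_mul_choose (T U : Finset X) :
    #{σ : Perm X | T.image σ ⊆ U} * (Fintype.card X).choose #T =
      Fintype.card (Perm X) * (#U).choose #T := by
  calc #{σ : Perm X | T.image σ ⊆ U} * (Fintype.card X).choose #T
      = ∑ T' ∈ powersetCard #T univ, #{σ : Perm X | T'.image σ ⊆ U} := by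
        rw [sum_const_nat fun T' hT' =>
            card_perm_image_subset_congr U (mem_powersetCard.1 hT').2,
          card_powersetCard, card_univ, mul_comm]
    _ = ∑ σ : Perm X, #{T' ∈ powersetCard #T univ | T'.image σ ⊆ U} := by
        simp only [card_filter]
        exact sum_comm
    _ = Fintype.card (Perm X) * (#U).choose #T := by
        simp [card_powersetCard_filter_image_subset]

theorem card_perm_image_subset_mul_pow_le (T U : Finset X) :
    #{σ : Perm X | T.image σ ⊆ U} * Fintype.card X ^ #T ≤
      Fintype.card (Perm X) * #U ^ #T := by
  have hchoose : 0 < (Fintype.card X).choose #T := Nat.choose_pos (card_le_univ T)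
  refine Nat.le_of_mul_le_mul_right ?_ hchoose
  calc #{σ : Perm X | T.image σ ⊆ U} * Fintype.card X ^ #T * (Fintype.card X).choose #T
      = Fintype.card (Perm X) * ((#U).choose #T * Fintype.card X ^ #T) := by
        rw [mul_right_comm, card_perm_image_subset_mul_choose, mul_assoc]
    _ ≤ Fintype.card (Perm X) * ((Fintype.card X).choose #T * #U ^ #T) :=
        Nat.mul_le_mul_left _ (Nat.choose_mul_pow_le_choose_mul_pow (card_le_univ U) _)
    _ = Fintype.card (Perm X) * #U ^ #T * (Fintype.card X).choose #T := by ring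

theorem sum_perm_pow_card_image_inter_le (K U : Finset X) {c : ℝ} (hc : 0 ≤ c) :
    ∑ σ : Perm X, (1 + c) ^ #(K.image σ ∩ U) ≤
      Fintype.card (Perm X) * (1 + c * #U / Fintype.card X) ^ #K := by
  have hprob (T : Finset X) :
      (#{σ : Perm X | T.image σ ⊆ U} : ℝ) ≤
        Fintype.card (Perm X) * ((#U : ℝ) / Fintype.card X) ^ #T := by
    have hpos : 0 < Fintype.card X ^ #T := by
      rcases (#T).eq_zero_or_pos with h | h
      · simp [h]
      · exact pow_pos (h.trans_le (card_le_univ T)) _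
    rw [div_pow, ← mul_div_assoc, le_div_iff₀ (by exact_mod_cast hpos)]
    exact_mod_cast card_perm_image_subset_mul_pow_le T U
  calc ∑ σ : Perm X, (1 + c) ^ #(K.image σ ∩ U)
      = ∑ T ∈ K.powerset, c ^ #T * #{σ : Perm X | T.image σ ⊆ U} := by
        simp_rw [pow_card_image_inter_eq_sum_powerset (Equiv.injective _), sum_filter,
          card_filter, Nat.cast_sum, mul_sum]
        rw [sum_comm]
        simp
    _ ≤ ∑ T ∈ K.powerset,
          c ^ #T * (Fintype.card (Perm X) * ((#U : ℝ) / Fintype.card X) ^ #T) := by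
        gcongr
        exact hprob _
    _ = Fintype.card (Perm X) * (1 + c * #U / Fintype.card X) ^ #K := by
        rw [add_comm, ← sum_pow_mul_eq_add_pow, mul_sum]
        exact sum_congr rfl fun T _ => by rw [one_pow, mul_one, mul_div_assoc, mul_pow]; ring
end

theorem stmt4_general {X : Type*} [Fintype X] [DecidableEq X]
    (U K : Finset X)
    (lam : ℝ) (hlam : 0 < lam) :
    (∑ σ : Equiv.Perm X, Real.exp (lam * ((K.image ⇑σ ∩ U).card : ℝ))) /
        (Fintype.card (Equiv.Perm X) : ℝ) ≤
      ((U.card : ℝ) / (Fintype.card X : ℝ) * Real.exp lam +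
        1 - (U.card : ℝ) / (Fintype.card X : ℝ)) ^ K.card := by
  have hexp (n : ℕ) : Real.exp (lam * n) = (1 + (Real.exp lam - 1)) ^ n := by
    rw [add_sub_cancel, mul_comm, Real.exp_nat_mul]
  rw [div_le_iff₀ (by positivity)]
  calc ∑ σ : Perm X, Real.exp (lam * #(K.image σ ∩ U))
      = ∑ σ : Perm X, (1 + (Real.exp lam - 1)) ^ #(K.image σ ∩ U) := by simp only [hexp]
    _ ≤ Fintype.card (Perm X) * (1 + (Real.exp lam - 1) * #U / Fintype.card X) ^ #K :=
        sum_perm_pow_card_image_inter_le K U (by linarith [Real.one_le_exp hlam.le])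
    _ = _ := by ring

theorem stmt4 {X : Type*} [Fintype X] [DecidableEq X]
    (U K : Finset X) (hU : U.Nonempty) (hK : K.Nonempty)
    (lam : ℝ) (hlam : 0 < lam) :
    (∑ σ : Equiv.Perm X, Real.exp (lam * ((K.image ⇑σ ∩ U).card : ℝ))) /
        (Fintype.card (Equiv.Perm X) : ℝ) ≤
      ((U.card : ℝ) / (Fintype.card X : ℝ) * Real.exp lam +
        1 - (U.card : ℝ) / (Fintype.card X : ℝ)) ^ K.card :=
  stmt4_general U K lam hlam
end
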